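/- Let φ : (0,∞) → (0,∞) be continuous and strictly increasing with φ(0⁺) = 0, φ(1) = 1, φ(∞) = ∞, and let μ_i, μ be nonzero finite Borel measures on S^{n-1}, none concentrated on any closed hemisphere, with μ_i → μ weakly. Define Ĝ_φ(ν) = inf{ ∫ φ(h_L) dν : L a convex body with origin interior and |L°| = ω_n }. Then Ĝ_φ(μ_i) → Ĝ_φ(μ). -/

import Mathlib

/-!
Upper semicontinuity is immediate: for a fixed admissible `L` the integrand `φ ∘ h_L` is continuous
on the sphere, so `∫ φ(h_L) dμᵢ → ∫ φ(h_L) dμ`.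

For the lower bound take near-minimizers `Lᵢ` for `μᵢ`. Since `μ` charges every open hemisphere,
weak convergence gives `a, t > 0` with `∫ (u·w)₊ dμᵢ - t μᵢ(S) ≥ a` for all unit `w` and large `i`.
Integrating `φ(|x| t) ((u·x/|x|)₊ - t) ≤ φ(h_L(u))` and using `φ(∞) = ∞` then traps the `Lᵢ` in a
fixed ball `B_R`. The normalization `|Lᵢ°| = ω_n` forces `h_{Lᵢ} ≥ m > 0`: otherwise `Lᵢ°` would
contain too many disjoint balls of radius `1/(4R)` along a segment. Hence the integrands
`φ ∘ h_{Lᵢ}` are uniformly bounded and equicontinuous, so precompact by Arzelà–Ascoli, and weak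
convergence is uniform on precompact sets of test functions.
-/

open MeasureTheory Metric Filter Set ENNReal

noncomputable section

abbrev E (n : ℕ) := EuclideanSpace ℝ (Fin n)

abbrev Sph (n : ℕ) := ↥(Metric.sphere (0 : E n) 1)

/-- Convex body in `ℝⁿ` with the origin in its interior. -/
def IsBody {n : ℕ} (K : Set (E n)) : Prop :=
  IsCompact K ∧ Convex ℝ K ∧ 0 ∈ interior K

/-- Support function of a set. -/
def supportFn {n : ℕ} (K : Set (E n)) (u : E n) : ℝ :=
  sSup ((fun x => (inner ℝ x u : ℝ)) '' K)

/-- Polar body. -/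
def polarBody {n : ℕ} (K : Set (E n)) : Set (E n) :=
  {y | ∀ x ∈ K, (inner ℝ x y : ℝ) ≤ 1}

/-- Radial function. -/
def radialFn {n : ℕ} (K : Set (E n)) (u : E n) : ℝ :=
  sSup {r : ℝ | 0 ≤ r ∧ r • u ∈ K}

/-- Volume of the unit ball in `ℝⁿ`. -/
def unitBallVol (n : ℕ) : ℝ≥0∞ := volume (Metric.closedBall (0 : E n) 1)

/-- The infimum `Ĝ_φ(ν)` of `∫ φ(h_L) dν` over convex bodies `L` with `|L°| = ω_n`. -/
def Ghat {n : ℕ} (φ : ℝ → ℝ) (ν : Measure (Sph n)) : ℝ :=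
  sInf {x : ℝ | ∃ L : Set (E n), IsBody L ∧ volume (polarBody L) = unitBallVol n ∧
    x = ∫ u : Sph n, φ (supportFn L (u : E n)) ∂ν}

open Topology BoundedContinuousFunction
open scoped RealInnerProductSpace NNReal

section SupportFunction

variable {n : ℕ}

theorem inner_le_supportFn {K : Set (E n)} (hK : IsCompact K) {x : E n} (hx : x ∈ K) (u : E n) :
    ⟪x, u⟫ ≤ supportFn K u :=
  le_csSup (hK.image (continuous_id.inner continuous_const)).bddAbove (mem_image_of_mem _ hx)

theorem supportFn_le {K : Set (E n)} (hK : K.Nonempty) {u : E n} {c : ℝ}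
    (h : ∀ x ∈ K, ⟪x, u⟫ ≤ c) : supportFn K u ≤ c :=
  csSup_le (hK.image _) (forall_mem_image.2 h)

theorem supportFn_le_of_subset_closedBall {K : Set (E n)} (hK : K.Nonempty) {R : ℝ}
    (hKR : K ⊆ closedBall 0 R) {u : E n} (hu : ‖u‖ = 1) : supportFn K u ≤ R :=
  supportFn_le hK fun x hx => by
    simpa [hu] using (real_inner_le_norm x u).trans
      (mul_le_mul_of_nonneg_right (mem_closedBall_zero_iff.1 (hKR hx)) (norm_nonneg u))

theorem lipschitzWith_supportFn {K : Set (E n)} (hK : IsCompact K) (hne : K.Nonempty) {R : ℝ}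
    (hKR : K ⊆ closedBall 0 R) : LipschitzWith R.toNNReal (supportFn K) := by
  refine LipschitzWith.of_le_add_mul' R fun u v => supportFn_le hne fun x hx => ?_
  have hxu : ⟪x, u - v⟫ ≤ R * dist u v :=
    calc ⟪x, u - v⟫ ≤ ‖x‖ * ‖u - v‖ := real_inner_le_norm _ _
      _ ≤ R * dist u v := by
        rw [dist_eq_norm]
        exact mul_le_mul_of_nonneg_right (mem_closedBall_zero_iff.1 (hKR hx)) (norm_nonneg _)
  calc ⟪x, u⟫ = ⟪x, v⟫ + ⟪x, u - v⟫ := by rw [inner_sub_right]; ring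
    _ ≤ supportFn K v + R * dist u v := add_le_add (inner_le_supportFn hK hx v) hxu

namespace IsBody

variable {K : Set (E n)}

theorem nonempty (hK : IsBody K) : K.Nonempty :=
  ⟨0, interior_subset hK.2.2⟩

theorem continuous_supportFn (hK : IsBody K) : Continuous (supportFn K) := by
  obtain ⟨R, hR⟩ := hK.1.isBounded.subset_closedBall 0
  exact (lipschitzWith_supportFn hK.1 hK.nonempty hR).continuous

theorem supportFn_pos (hK : IsBody K) {u : E n} (hu : ‖u‖ = 1) : 0 < supportFn K u := by
  obtain ⟨ε, hε, hεK⟩ := nhds_basis_closedBall.mem_iff.1 (mem_interior_iff_mem_nhds.1 hK.2.2)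
  have hεu : ε • u ∈ K := hεK (by simp [norm_smul, hu, abs_of_pos hε])
  calc 0 < ε := hε
    _ = ⟪ε • u, u⟫ := by rw [real_inner_smul_left, real_inner_self_eq_norm_sq, hu]; ring
    _ ≤ supportFn K u := inner_le_supportFn hK.1 hεu u

end IsBody

theorem polarBody_closedBall_one : polarBody (closedBall (0 : E n) 1) = closedBall 0 1 := by
  ext y
  refine ⟨fun hy => ?_, fun hy x hx => ?_⟩
  · rw [mem_closedBall_zero_iff]
    by_contra! hy1
    have hy0 : 0 < ‖y‖ := one_pos.trans hy1
    have hunit : ‖y‖⁻¹ • y ∈ closedBall (0 : E n) 1 := by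
      simp [norm_smul, inv_mul_cancel₀ hy0.ne']
    have := hy _ hunit
    rw [real_inner_smul_left, real_inner_self_eq_norm_sq, sq, inv_mul_cancel_left₀ hy0.ne'] at this
    linarith
  · calc ⟪x, y⟫ ≤ ‖x‖ * ‖y‖ := real_inner_le_norm x y
      _ ≤ 1 * 1 := mul_le_mul (mem_closedBall_zero_iff.1 hx) (mem_closedBall_zero_iff.1 hy)
          (norm_nonneg y) zero_le_one
      _ = 1 := one_mul 1

theorem isBody_closedBall_one : IsBody (closedBall (0 : E n) 1) :=
  ⟨isCompact_closedBall _ _, convex_closedBall _ _, by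
    rw [interior_closedBall _ one_ne_zero]; exact mem_ball_self one_pos⟩

end SupportFunction

section Packing

variable {n : ℕ}

theorem closedBall_smul_subset_polarBody {L : Set (E n)} {R h c : ℝ} (hR : 0 < R)
    (hLR : L ⊆ closedBall 0 R) {u : E n} (hLh : ∀ x ∈ L, ⟪x, u⟫ ≤ h) (hc : 0 ≤ c)
    (hch : c * h ≤ 1 / 2) : closedBall (c • u) (1 / (2 * R)) ⊆ polarBody L := by
  intro z hz x hx
  have hxz : ⟪x, z - c • u⟫ ≤ 1 / 2 :=
    calc ⟪x, z - c • u⟫ ≤ ‖x‖ * ‖z - c • u‖ := real_inner_le_norm _ _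
      _ ≤ R * (1 / (2 * R)) :=
        mul_le_mul (mem_closedBall_zero_iff.1 (hLR hx)) (mem_closedBall_iff_norm.1 hz)
          (norm_nonneg _) hR.le
      _ = 1 / 2 := by field_simp
  calc ⟪x, z⟫ = c * ⟪x, u⟫ + ⟪x, z - c • u⟫ := by
        rw [inner_sub_right, real_inner_smul_right]; ring
    _ ≤ c * h + 1 / 2 := add_le_add (mul_le_mul_of_nonneg_left (hLh x hx) hc) hxz
    _ ≤ 1 := by linarith

theorem natCast_mul_pow_le_one_of_pairwiseDisjoint {ι : Type*} {s : Finset ι} {c : ι → E n}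
    {r : ℝ} (hr : 0 ≤ r) {S : Set (E n)} (hS : volume S ≤ unitBallVol n)
    (hdisj : (s : Set ι).PairwiseDisjoint fun k => closedBall (c k) r)
    (hsub : ∀ k ∈ s, closedBall (c k) r ⊆ S) : (s.card : ℝ) * r ^ n ≤ 1 := by
  have hω0 : unitBallVol n ≠ 0 := (measure_closedBall_pos volume _ one_pos).ne'
  have hωtop : unitBallVol n ≠ ⊤ := measure_closedBall_lt_top.ne
  have hvol : ENNReal.ofReal (s.card * r ^ n) * unitBallVol n ≤ 1 * unitBallVol n :=
    calc ENNReal.ofReal (s.card * r ^ n) * unitBallVol n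
        = ∑ k ∈ s, volume (closedBall (c k) r) := by
          simp [Measure.addHaar_closedBall' _ _ hr, unitBallVol,
            ENNReal.ofReal_mul, mul_assoc]
      _ = volume (⋃ k ∈ s, closedBall (c k) r) :=
          (measure_biUnion_finset hdisj fun _ _ => measurableSet_closedBall).symm
      _ ≤ volume S := measure_mono (iUnion₂_subset hsub)
      _ ≤ 1 * unitBallVol n := by rwa [one_mul]
  rwa [ENNReal.mul_le_mul_iff_left hω0 hωtop, ENNReal.ofReal_le_one] at hvol

theorem le_of_inner_le_of_volume_polarBody_le {L : Set (E n)} {R h : ℝ} (hR : 0 < R)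
    (hLR : L ⊆ closedBall 0 R) (hvol : volume (polarBody L) ≤ unitBallVol n) {u : E n}
    (hu : ‖u‖ = 1) (hh : 0 < h) (hLh : ∀ x ∈ L, ⟪x, u⟫ ≤ h) :
    R * (1 / (4 * R)) ^ n / 2 ≤ h := by
  -- the balls of radius `1 / (4R)` centred at `(k / R) • u`, `k < R / (2h)`, are disjoint
  -- and lie in `L°`
  set N := ⌈R / (2 * h)⌉₊
  have hsub : ∀ k ∈ Finset.range N,
      closedBall (((k : ℝ) / R) • u) (1 / (4 * R)) ⊆ polarBody L := by
    intro k hk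
    have hkN : (k : ℝ) < R / (2 * h) := Nat.lt_ceil.1 (Finset.mem_range.1 hk)
    refine (closedBall_subset_closedBall ?_).trans
      (closedBall_smul_subset_polarBody hR hLR hLh (by positivity) ?_)
    · gcongr; linarith
    · rw [lt_div_iff₀ (by positivity)] at hkN
      rw [div_mul_eq_mul_div, div_le_iff₀ hR]
      linarith
  have hdisj : (Finset.range N : Set ℕ).PairwiseDisjoint
      fun k => closedBall (((k : ℝ) / R) • u) (1 / (4 * R)) := by
    intro j _ k _ hjk
    refine closedBall_disjoint_closedBall ?_
    rw [dist_eq_norm, ← sub_smul, norm_smul, hu, mul_one, ← sub_div, norm_div,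
      Real.norm_of_nonneg hR.le, lt_div_iff₀ hR]
    have hjk1 : (1 : ℝ) ≤ ‖(j : ℝ) - k‖ := by
      have h := Int.one_le_abs (sub_ne_zero.2 (Nat.cast_injective.ne hjk : (j : ℤ) ≠ k))
      rw [Real.norm_eq_abs]
      exact_mod_cast h
    field_simp
    linarith
  have hcount := natCast_mul_pow_le_one_of_pairwiseDisjoint (by positivity) hvol hdisj hsub
  rw [Finset.card_range] at hcount
  have hN : R / (2 * h) ≤ N := Nat.le_ceil _
  have hbound : R / (2 * h) * (1 / (4 * R)) ^ n ≤ 1 :=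
    (mul_le_mul_of_nonneg_right hN (by positivity)).trans hcount
  rw [div_mul_eq_mul_div, div_le_one (by positivity)] at hbound
  linarith

end Packing

section WeakConvergence

variable {X ι : Type*} [TopologicalSpace X] [MeasurableSpace X]

theorem BoundedContinuousFunction.dist_integral_le [OpensMeasurableSpace X] (ν : Measure X)
    [IsFiniteMeasure ν] (f g : X →ᵇ ℝ) : dist (∫ x, f x ∂ν) (∫ x, g x ∂ν) ≤ ν.real univ * dist f g := by
  rw [dist_eq_norm, dist_eq_norm, ← integral_sub (f.integrable ν) (g.integrable ν)]
  exact (f - g).norm_integral_le_mul_norm ν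

theorem BoundedContinuousFunction.lipschitzWith_integral [OpensMeasurableSpace X]
    (ν : Measure X) [IsFiniteMeasure ν] :
    LipschitzWith (ν.real univ).toNNReal fun f : X →ᵇ ℝ => ∫ x, f x ∂ν :=
  LipschitzWith.of_dist_le' (dist_integral_le ν)

variable {l : Filter ι} {μs : ι → Measure X} {μ : Measure X}

theorem eventually_measureReal_univ_lt
    (hweak : ∀ f : X →ᵇ ℝ, Tendsto (fun i => ∫ x, f x ∂μs i) l (𝓝 (∫ x, f x ∂μ))) :
    ∀ᶠ i in l, (μs i).real univ < μ.real univ + 1 := by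
  have h := hweak (const X 1)
  simp only [const_apply, integral_const, smul_eq_mul, mul_one] at h
  exact h.eventually_lt_const (lt_add_one _)

theorem tendstoUniformlyOn_integral_of_totallyBounded [OpensMeasurableSpace X]
    [∀ i, IsFiniteMeasure (μs i)] [IsFiniteMeasure μ]
    (hweak : ∀ f : X →ᵇ ℝ, Tendsto (fun i => ∫ x, f x ∂μs i) l (𝓝 (∫ x, f x ∂μ)))
    {A : Set (X →ᵇ ℝ)} (hA : TotallyBounded A) :
    TendstoUniformlyOn (fun i (f : X →ᵇ ℝ) => ∫ x, f x ∂μs i) (fun f => ∫ x, f x ∂μ) l A := by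
  rw [Metric.tendstoUniformlyOn_iff]
  intro ε hε
  set B := μ.real univ
  have hB : 0 ≤ B := measureReal_nonneg
  set δ := ε / (2 * (2 * B + 1)) with hδ
  obtain ⟨net, hnet, hcover⟩ := Metric.totallyBounded_iff.1 hA δ (by positivity)
  have hclose : ∀ᶠ i in l, ∀ g ∈ net, dist (∫ x, g x ∂μ) (∫ x, g x ∂μs i) < ε / 2 :=
    (eventually_all_finite hnet).2 fun g _ =>
      (hweak g).eventually (ball_mem_nhds _ (half_pos hε)) |>.mono fun i hi => by
        rw [dist_comm]; exact hi
  filter_upwards [hclose, eventually_measureReal_univ_lt hweak] with i hi hmass f hf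
  obtain ⟨g, hg, hfg⟩ := mem_iUnion₂.1 (hcover hf)
  have hfg' : dist f g ≤ δ := (mem_ball.1 hfg).le
  have hμ : dist (∫ x, f x ∂μ) (∫ x, g x ∂μ) ≤ B * δ :=
    (dist_integral_le μ f g).trans (by gcongr)
  have hμi : dist (∫ x, g x ∂μs i) (∫ x, f x ∂μs i) ≤ (B + 1) * δ := by
    rw [dist_comm]
    exact (dist_integral_le _ f g).trans (mul_le_mul hmass.le hfg' dist_nonneg (by positivity))
  calc dist (∫ x, f x ∂μ) (∫ x, f x ∂μs i)
      ≤ dist (∫ x, f x ∂μ) (∫ x, g x ∂μ) + dist (∫ x, g x ∂μ) (∫ x, g x ∂μs i)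
        + dist (∫ x, g x ∂μs i) (∫ x, f x ∂μs i) := dist_triangle4 _ _ _ _
    _ < B * δ + ε / 2 + (B + 1) * δ := add_lt_add_of_lt_of_le (by linarith [hi g hg]) hμi
    _ = ε := by rw [hδ]; field_simp; ring

end WeakConvergence

section Equicontinuity

variable {X ι : Type*} [PseudoMetricSpace X]

theorem ContinuousOn.uniformEquicontinuous_comp {g : ℝ → ℝ} {a b : ℝ}
    (hg : ContinuousOn g (Icc a b)) {K : ℝ≥0} {F : ι → X → ℝ} (hF : ∀ i, LipschitzWith K (F i))
    (hFab : ∀ i x, F i x ∈ Icc a b) : UniformEquicontinuous fun i => g ∘ F i := by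
  rw [Metric.uniformEquicontinuous_iff]
  intro ε hε
  obtain ⟨δ, hδ, hgδ⟩ :=
    Metric.uniformContinuousOn_iff.1 (isCompact_Icc.uniformContinuousOn_of_continuous hg) ε hε
  refine ⟨δ / (K + 1), by positivity, fun x y hxy i => hgδ _ (hFab i x) _ (hFab i y) ?_⟩
  calc dist (F i x) (F i y) ≤ K * dist x y := (hF i).dist_le_mul x y
    _ ≤ (K + 1) * dist x y := by gcongr; linarith
    _ < δ := by rwa [lt_div_iff₀' (by positivity)] at hxy

theorem totallyBounded_setOf_comp_lipschitzWith [CompactSpace X] {g : ℝ → ℝ} {a b : ℝ}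
    (hg : ContinuousOn g (Icc a b)) (K : ℝ≥0) :
    TotallyBounded {f : X →ᵇ ℝ | ∃ h : X → ℝ, LipschitzWith K h ∧ (∀ x, h x ∈ Icc a b) ∧
      ⇑f = g ∘ h} := by
  set A := {f : X →ᵇ ℝ | ∃ h : X → ℝ, LipschitzWith K h ∧ (∀ x, h x ∈ Icc a b) ∧ ⇑f = g ∘ h}
  choose h hK hab hfh using fun f : A => f.2
  have hmaps : ∀ f : X →ᵇ ℝ, ∀ x, f ∈ A → f x ∈ g '' Icc a b := by
    rintro f x ⟨h, -, hab, hfh⟩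
    exact hfh ▸ mem_image_of_mem g (hab x)
  have hequi : Equicontinuous ((↑) : A → X → ℝ) := by
    rw [show ((↑) : A → X → ℝ) = fun f => g ∘ h f from funext fun f => hfh f]
    exact (hg.uniformEquicontinuous_comp hK hab).equicontinuous
  exact (arzela_ascoli _ (isCompact_Icc.image_of_continuousOn hg) A hmaps hequi).totallyBounded
    |>.subset subset_closure

end Equicontinuity

section Sphere

variable {n : ℕ}

def posInner (w : E n) : Sph n →ᵇ ℝ :=
  mkOfCompact ⟨fun u => max ⟪(u : E n), w⟫ 0,
    (continuous_subtype_val.inner continuous_const).max continuous_const⟩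

theorem posInner_le_one {w : E n} (hw : ‖w‖ = 1) (u : Sph n) : posInner w u ≤ 1 :=
  max_le (by simpa [hw, norm_eq_of_mem_sphere u] using real_inner_le_norm (u : E n) w) zero_le_one

theorem lipschitzWith_posInner : LipschitzWith 1 (posInner (n := n)) := by
  refine LipschitzWith.of_dist_le_mul fun w v => ?_
  rw [NNReal.coe_one, one_mul]
  refine (dist_le dist_nonneg).2 fun u => ?_
  calc dist (posInner w u) (posInner v u) ≤ |⟪(u : E n), w⟫ - ⟪(u : E n), v⟫| :=
        abs_max_sub_max_le_abs _ _ _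
    _ = |⟪(u : E n), w - v⟫| := by rw [inner_sub_right]
    _ ≤ ‖(u : E n)‖ * ‖w - v‖ := abs_real_inner_le_norm _ _
    _ = dist w v := by rw [norm_eq_of_mem_sphere u, one_mul, dist_eq_norm]

def IsNormalizedBody (L : Set (E n)) : Prop :=
  IsBody L ∧ volume (polarBody L) = unitBallVol n

theorem isNormalizedBody_closedBall_one : IsNormalizedBody (closedBall (0 : E n) 1) :=
  ⟨isBody_closedBall_one, by rw [polarBody_closedBall_one]; rfl⟩

variable {φ : ℝ → ℝ}

theorem continuous_comp_supportFn (hφc : ContinuousOn φ (Ioi 0)) {L : Set (E n)} (hL : IsBody L) :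
    Continuous fun u : Sph n => φ (supportFn L (u : E n)) :=
  hφc.comp_continuous (hL.continuous_supportFn.comp continuous_subtype_val) fun u =>
    hL.supportFn_pos (norm_eq_of_mem_sphere u)

theorem Ghat_le_integral (hφpos : ∀ t ∈ Ioi (0 : ℝ), 0 < φ t) (ν : Measure (Sph n))
    {L : Set (E n)} (hL : IsNormalizedBody L) : Ghat φ ν ≤ ∫ u, φ (supportFn L (u : E n)) ∂ν := by
  refine csInf_le (⟨0, ?_⟩ : BddBelow _) ⟨L, hL.1, hL.2, rfl⟩
  rintro _ ⟨K, hK, -, rfl⟩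
  exact integral_nonneg fun u => (hφpos _ (hK.supportFn_pos (norm_eq_of_mem_sphere u))).le

theorem exists_integral_lt_of_Ghat_lt {ν : Measure (Sph n)} {b : ℝ} (hb : Ghat φ ν < b) :
    ∃ L, IsNormalizedBody L ∧ ∫ u, φ (supportFn L (u : E n)) ∂ν < b := by
  obtain ⟨_, ⟨L, hL, hvol, rfl⟩, hlt⟩ := exists_lt_of_csInf_lt
    (by exact ⟨_, _, isNormalizedBody_closedBall_one.1, isNormalizedBody_closedBall_one.2, rfl⟩) hb
  exact ⟨L, ⟨hL, hvol⟩, hlt⟩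

end Sphere

section Continuity

variable {n : ℕ} {φ : ℝ → ℝ} {ι : Type*} {l : Filter ι} {μs : ι → Measure (Sph n)}
  {μ : Measure (Sph n)}

theorem eventually_Ghat_lt (hφc : ContinuousOn φ (Ioi 0)) (hφpos : ∀ t ∈ Ioi (0 : ℝ), 0 < φ t)
    (hweak : ∀ f : Sph n →ᵇ ℝ, Tendsto (fun i => ∫ u, f u ∂μs i) l (𝓝 (∫ u, f u ∂μ)))
    {b : ℝ} (hb : Ghat φ μ < b) : ∀ᶠ i in l, Ghat φ (μs i) < b := by
  obtain ⟨L, hL, hLb⟩ := exists_integral_lt_of_Ghat_lt hb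
  filter_upwards [(hweak (mkOfCompact ⟨_, continuous_comp_supportFn hφc hL.1⟩)).eventually_lt_const
    hLb] with i hi
  exact (Ghat_le_integral hφpos _ hL).trans_lt hi

theorem mul_posInner_sub_le_comp_supportFn (hφmono : StrictMonoOn φ (Ioi 0))
    (hφpos : ∀ t ∈ Ioi (0 : ℝ), 0 < φ t) {L : Set (E n)} (hL : IsBody L) {d t : ℝ} {w : E n}
    (hd : 0 < d) (ht : 0 < t) (hw : ‖w‖ = 1) (hdw : d • w ∈ L) (u : Sph n) :
    φ (d * t) * (posInner w u - t) ≤ φ (supportFn L (u : E n)) := by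
  have hφdt : 0 < φ (d * t) := hφpos _ (mul_pos hd ht)
  have hhu : 0 < supportFn L (u : E n) := hL.supportFn_pos (norm_eq_of_mem_sphere u)
  rcases le_or_gt (posInner w u) t with hle | hlt
  · exact (mul_nonpos_of_nonneg_of_nonpos hφdt.le (sub_nonpos.2 hle)).trans (hφpos _ hhu).le
  have htw : t < ⟪(u : E n), w⟫ := by
    rcases lt_max_iff.1 hlt with h | h
    · exact h
    · exact absurd h ht.not_gt
  have hdh : d * t < supportFn L (u : E n) :=
    calc d * t < d * ⟪(u : E n), w⟫ := mul_lt_mul_of_pos_left htw hd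
      _ = ⟪d • w, (u : E n)⟫ := by rw [real_inner_smul_left, real_inner_comm]
      _ ≤ supportFn L (u : E n) := inner_le_supportFn hL.1 hdw _
  calc φ (d * t) * (posInner w u - t) ≤ φ (d * t) * 1 :=
        mul_le_mul_of_nonneg_left (by linarith [posInner_le_one hw u]) hφdt.le
    _ ≤ φ (supportFn L (u : E n)) := by
        rw [mul_one]; exact (hφmono (mul_pos hd ht) hhu hdh).le

theorem subset_closedBall_of_integral_le (hφc : ContinuousOn φ (Ioi 0))
    (hφmono : StrictMonoOn φ (Ioi 0)) (hφpos : ∀ t ∈ Ioi (0 : ℝ), 0 < φ t)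
    {ν : Measure (Sph n)} [IsFiniteMeasure ν] {a t C T : ℝ} (ha : 0 < a) (ht : 0 < t)
    (hT : 0 < T) (hCT : C < a * φ T)
    (hν : ∀ w ∈ sphere (0 : E n) 1, a ≤ ∫ u, posInner w u ∂ν - t * ν.real univ)
    {L : Set (E n)} (hL : IsBody L) (hLC : ∫ u, φ (supportFn L (u : E n)) ∂ν ≤ C) :
    L ⊆ closedBall 0 (T / t) := by
  intro x hx
  rw [mem_closedBall_zero_iff]
  by_contra! hxT
  have hx0 : 0 < ‖x‖ := (div_pos hT ht).trans hxT
  set w := ‖x‖⁻¹ • x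
  have hw : ‖w‖ = 1 := by simp [w, norm_smul, inv_mul_cancel₀ hx0.ne']
  have hdw : ‖x‖ • w ∈ L := by simpa [w, smul_smul, mul_inv_cancel₀ hx0.ne'] using hx
  have hφT : φ T < φ (‖x‖ * t) := hφmono hT (mul_pos hx0 ht) ((div_lt_iff₀ ht).1 hxT)
  have hint : φ (‖x‖ * t) * (∫ u, posInner w u ∂ν - t * ν.real univ)
      ≤ ∫ u, φ (supportFn L (u : E n)) ∂ν :=
    calc _ = ∫ u, φ (‖x‖ * t) * (posInner w u - t) ∂ν := by
          rw [integral_const_mul, integral_sub ((posInner w).integrable ν) (integrable_const t),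
            integral_const, smul_eq_mul, mul_comm t]
      _ ≤ _ := integral_mono ((((posInner w).integrable ν).sub (integrable_const t)).const_mul _)
          ((mkOfCompact ⟨_, continuous_comp_supportFn hφc hL⟩).integrable ν)
          (mul_posInner_sub_le_comp_supportFn hφmono hφpos hL hx0 ht hw hdw)
  have h1 : φ (‖x‖ * t) * a ≤ φ (‖x‖ * t) * (∫ u, posInner w u ∂ν - t * ν.real univ) :=
    mul_le_mul_of_nonneg_left (hν w (mem_sphere_zero_iff_norm.2 hw)) (hφpos _ (mul_pos hx0 ht)).le
  have h2 : a * φ T < a * φ (‖x‖ * t) := mul_lt_mul_of_pos_left hφT ha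
  linarith

theorem exists_forall_sphere_le_integral_posInner_sub [Nonempty (Sph n)]
    [∀ i, IsFiniteMeasure (μs i)] [IsFiniteMeasure μ]
    (hconc : ∀ v : Sph n, 0 < ∫ u, posInner v u ∂μ)
    (hweak : ∀ f : Sph n →ᵇ ℝ, Tendsto (fun i => ∫ u, f u ∂μs i) l (𝓝 (∫ u, f u ∂μ))) :
    ∃ a > 0, ∃ t > 0, ∀ᶠ i in l, ∀ w ∈ sphere (0 : E n) 1,
      a ≤ ∫ u, posInner w u ∂μs i - t * (μs i).real univ := by
  have hcont : Continuous fun w : E n => ∫ u, posInner w u ∂μ :=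
    ((lipschitzWith_integral μ).comp lipschitzWith_posInner).continuous
  obtain ⟨w₀, hw₀, hmin⟩ := (isCompact_sphere (0 : E n) 1).exists_isMinOn
    (nonempty_coe_sort.1 ‹_›) hcont.continuousOn
  set c := ∫ u, posInner w₀ u ∂μ
  have hc : 0 < c := hconc ⟨w₀, hw₀⟩
  have hunif := Metric.tendstoUniformlyOn_iff.1 (tendstoUniformlyOn_integral_of_totallyBounded
    hweak ((isCompact_sphere (0 : E n) 1).image lipschitzWith_posInner.continuous).totallyBounded)
    (c / 2) (half_pos hc)
  have hB : 0 ≤ μ.real univ := measureReal_nonneg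
  refine ⟨c / 4, by positivity, c / (4 * (μ.real univ + 1)), by positivity, ?_⟩
  filter_upwards [hunif, eventually_measureReal_univ_lt hweak] with i hi hmass w hw
  have hclose := hi _ (mem_image_of_mem _ hw)
  rw [Real.dist_eq, abs_lt] at hclose
  have hmass' : c / (4 * (μ.real univ + 1)) * (μs i).real univ ≤ c / 4 :=
    calc _ ≤ c / (4 * (μ.real univ + 1)) * (μ.real univ + 1) := by gcongr
      _ = c / 4 := by field_simp
  have hmin' : c ≤ ∫ u, posInner w u ∂μ := hmin hw
  linarith

theorem exists_eventually_subset_closedBall [Nonempty (Sph n)] [∀ i, IsFiniteMeasure (μs i)]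
    [IsFiniteMeasure μ] (hφc : ContinuousOn φ (Ioi 0)) (hφmono : StrictMonoOn φ (Ioi 0))
    (hφpos : ∀ t ∈ Ioi (0 : ℝ), 0 < φ t) (hφtop : Tendsto φ atTop atTop)
    (hconc : ∀ v : Sph n, 0 < ∫ u, posInner v u ∂μ)
    (hweak : ∀ f : Sph n →ᵇ ℝ, Tendsto (fun i => ∫ u, f u ∂μs i) l (𝓝 (∫ u, f u ∂μ))) (C : ℝ) :
    ∃ R > 0, ∀ᶠ i in l, ∀ L, IsBody L → ∫ u, φ (supportFn L (u : E n)) ∂μs i ≤ C →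
      L ⊆ closedBall 0 R := by
  obtain ⟨a, ha, t, ht, hconc'⟩ := exists_forall_sphere_le_integral_posInner_sub hconc hweak
  obtain ⟨T, hCT, hT⟩ := ((hφtop.eventually_gt_atTop (C / a)).and (eventually_gt_atTop 0)).exists
  exact ⟨T / t, div_pos hT ht, hconc'.mono fun i hi L hL hLC =>
    subset_closedBall_of_integral_le hφc hφmono hφpos ha ht hT ((div_lt_iff₀' ha).1 hCT) hi hL hLC⟩

theorem IsNormalizedBody.supportFn_mem_Icc {L : Set (E n)} (hL : IsNormalizedBody L) {R : ℝ}
    (hR : 0 < R) (hLR : L ⊆ closedBall 0 R) (u : Sph n) :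
    supportFn L (u : E n) ∈ Icc (R * (1 / (4 * R)) ^ n / 2) R :=
  ⟨le_of_inner_le_of_volume_polarBody_le hR hLR hL.2.le (norm_eq_of_mem_sphere u)
      (hL.1.supportFn_pos (norm_eq_of_mem_sphere u)) fun _ hx => inner_le_supportFn hL.1.1 hx _,
    supportFn_le_of_subset_closedBall hL.1.nonempty hLR (norm_eq_of_mem_sphere u)⟩

theorem eventually_lt_Ghat [Nonempty (Sph n)] [∀ i, IsFiniteMeasure (μs i)] [IsFiniteMeasure μ]
    (hφc : ContinuousOn φ (Ioi 0)) (hφmono : StrictMonoOn φ (Ioi 0))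
    (hφpos : ∀ t ∈ Ioi (0 : ℝ), 0 < φ t) (hφtop : Tendsto φ atTop atTop)
    (hconc : ∀ v : Sph n, 0 < ∫ u, posInner v u ∂μ)
    (hweak : ∀ f : Sph n →ᵇ ℝ, Tendsto (fun i => ∫ u, f u ∂μs i) l (𝓝 (∫ u, f u ∂μ)))
    {a : ℝ} (ha : a < Ghat φ μ) : ∀ᶠ i in l, a < Ghat φ (μs i) := by
  obtain ⟨R, hR, hsub⟩ :=
    exists_eventually_subset_closedBall hφc hφmono hφpos hφtop hconc hweak (Ghat φ μ + 2)
  have hm : 0 < R * (1 / (4 * R)) ^ n / 2 := by positivity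
  have hA := totallyBounded_setOf_comp_lipschitzWith (X := Sph n) (b := R)
    (hφc.mono fun s hs => hm.trans_le hs.1) R.toNNReal
  set ε := min 1 ((Ghat φ μ - a) / 2)
  have hε : 0 < ε := lt_min one_pos (by linarith)
  filter_upwards [hsub, Metric.tendstoUniformlyOn_iff.1
    (tendstoUniformlyOn_integral_of_totallyBounded hweak hA) ε hε,
    eventually_Ghat_lt hφc hφpos hweak (lt_add_one (Ghat φ μ))] with i hsub hunif hup
  obtain ⟨L, hL, hLi⟩ := exists_integral_lt_of_Ghat_lt (lt_add_of_pos_right (Ghat φ (μs i)) hε)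
  have hLR : L ⊆ closedBall 0 R :=
    hsub L hL.1 (by linarith [min_le_left 1 ((Ghat φ μ - a) / 2)])
  have hclose := hunif (mkOfCompact ⟨_, continuous_comp_supportFn hφc hL.1⟩)
    ⟨fun u => supportFn L u, (lipschitzWith_supportFn hL.1.1 hL.1.nonempty hLR).restrict _,
      hL.supportFn_mem_Icc hR hLR, rfl⟩
  simp only [Real.dist_eq, abs_lt, mkOfCompact_apply, ContinuousMap.coe_mk] at hclose
  linarith [Ghat_le_integral hφpos μ hL, min_le_right 1 ((Ghat φ μ - a) / 2)]

end Continuity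

theorem Ghat_weakly_continuous_general {n : ℕ}
    (φ : ℝ → ℝ) (hφc : ContinuousOn φ (Ioi 0)) (hφmono : StrictMonoOn φ (Ioi 0))
    (hφpos : ∀ t ∈ Ioi (0 : ℝ), 0 < φ t)
    (hφtop : Tendsto φ atTop atTop)
    (μs : ℕ → Measure (Sph n)) (μ : Measure (Sph n))
    [∀ i, IsFiniteMeasure (μs i)] [IsFiniteMeasure μ]
    (hconc : ∀ v : Sph n, 0 < ∫ u : Sph n, max (inner ℝ (u : E n) (v : E n) : ℝ) 0 ∂μ)
    (hweak : ∀ g : Sph n → ℝ, Continuous g →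
      Tendsto (fun i => ∫ u, g u ∂(μs i)) atTop (nhds (∫ u, g u ∂μ))) :
    Tendsto (fun i => Ghat φ (μs i)) atTop (nhds (Ghat φ μ)) := by
  rcases isEmpty_or_nonempty (Sph n) with _ | _
  · simp only [Subsingleton.elim (μs _) μ, tendsto_const_nhds]
  have hweak' (f : Sph n →ᵇ ℝ) := hweak f f.continuous
  exact tendsto_order.2
    ⟨fun a ha => eventually_lt_Ghat hφc hφmono hφpos hφtop hconc hweak' ha,
      fun b hb => eventually_Ghat_lt hφc hφpos hweak' hb⟩

theorem Ghat_weakly_continuous {n : ℕ}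
    (φ : ℝ → ℝ) (hφc : ContinuousOn φ (Ioi 0)) (hφmono : StrictMonoOn φ (Ioi 0))
    (hφpos : ∀ t ∈ Ioi (0 : ℝ), 0 < φ t)
    (hφ0 : Tendsto φ (nhdsWithin 0 (Ioi 0)) (nhds 0))
    (hφ1 : φ 1 = 1) (hφtop : Tendsto φ atTop atTop)
    (μs : ℕ → Measure (Sph n)) (μ : Measure (Sph n))
    [∀ i, IsFiniteMeasure (μs i)] [IsFiniteMeasure μ]
    (hμs : ∀ i, μs i ≠ 0) (hμ : μ ≠ 0)
    (hconcs : ∀ i, ∀ v : Sph n,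
      0 < ∫ u : Sph n, max (inner ℝ (u : E n) (v : E n) : ℝ) 0 ∂(μs i))
    (hconc : ∀ v : Sph n, 0 < ∫ u : Sph n, max (inner ℝ (u : E n) (v : E n) : ℝ) 0 ∂μ)
    (hweak : ∀ g : Sph n → ℝ, Continuous g →
      Tendsto (fun i => ∫ u, g u ∂(μs i)) atTop (nhds (∫ u, g u ∂μ))) :
    Tendsto (fun i => Ghat φ (μs i)) atTop (nhds (Ghat φ μ)) :=
  Ghat_weakly_continuous_general φ hφc hφmono hφpos hφtop μs μ hconc hweak
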